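/- arXiv:1812.00951 — 2 statements merged into one kernel-verified Lean document; each statement's English description precedes it below -/
import Mathlib

section
/- Let X and Y be real Banach spaces and f : X → Y a locally Lipschitz map with a pseudo-Jacobian mapping Jf satisfying the chain rule condition on X. If Jf is regular at x₀ ∈ X, then sur(f, x₀) ≥ cov f(x₀) ≥ reg Jf(x₀), where sur(f,x₀) is the Ioffe constant of surjection of f at x₀ and cov f(x₀) is the exact covering bound of f around x₀. -/
open Filter Topology Metric Set MeasureTheory

noncomputable section

variable {X Y : Type*} [NormedAddCommGroup X] [NormedSpace ℝ X]
  [NormedAddCommGroup Y] [NormedSpace ℝ Y]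

/-- The upper right-hand Dini derivative of `φ` at `x` in the direction `v`. -/
def diniPlus (φ : X → ℝ) (x v : X) : ℝ :=
  Filter.limsup (fun t : ℝ => (φ (x + t • v) - φ x) / t) (𝓝[>] (0 : ℝ))

/-- `J` is a pseudo-Jacobian of `f` at `x`. -/
def IsPseudoJacobianAt (f : X → Y) (x : X) (J : Set (X →L[ℝ] Y)) : Prop :=
  J.Nonempty ∧ ∀ (y' : StrongDual ℝ Y) (v : X),
    diniPlus (fun z => y' (f z)) x v ≤ sSup ((fun T : X →L[ℝ] Y => y' (T v)) '' J)

/-- The Clarke generalized directional derivative of `φ` at `x` in the direction `v`. -/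
def clarkeDeriv (φ : X → ℝ) (x v : X) : ℝ :=
  Filter.limsup (fun p : X × ℝ => (φ (p.1 + p.2 • v) - φ p.1) / p.2)
    ((𝓝 x) ×ˢ (𝓝[>] (0 : ℝ)))

/-- The Clarke subdifferential of `φ` at `x`. -/
def clarkeSubdiff (φ : X → ℝ) (x : X) : Set (StrongDual ℝ X) :=
  {x' | ∀ v : X, x' v ≤ clarkeDeriv φ x v}

/-- `λ_F(x)`, the minimal norm of elements of the Clarke subdifferential of `F` at `x`. -/
def lambdaF (F : X → ℝ) (x : X) : ℝ :=
  sInf ((fun w : StrongDual ℝ X => ‖w‖) '' clarkeSubdiff F x)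

/-- The Banach constant `C(T) = inf {‖T* y*‖ : ‖y*‖ = 1}`. -/
def banachC (T : X →L[ℝ] Y) : ℝ :=
  sInf ((fun y' : StrongDual ℝ Y => ‖y'.comp T‖) '' {y' | ‖y'‖ = 1})

/-- The dual Banach constant `C*(T) = inf {‖T u‖ : ‖u‖ = 1}`. -/
def banachCStar (T : X →L[ℝ] Y) : ℝ :=
  sInf ((fun u : X => ‖T u‖) '' {u : X | ‖u‖ = 1})

/-- `sur Jf(x) = sup_{r>0} inf {C(T) : T ∈ co Jf(B(x;r))}`. -/
def surJ (Jf : X → Set (X →L[ℝ] Y)) (x : X) : ℝ :=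
  sSup {c : ℝ | ∃ r > (0 : ℝ),
    c = sInf (banachC '' convexHull ℝ (⋃ z ∈ ball x r, Jf z))}

/-- `inj Jf(x) = sup_{r>0} inf {C*(T) : T ∈ co Jf(B(x;r))}`. -/
def injJ (Jf : X → Set (X →L[ℝ] Y)) (x : X) : ℝ :=
  sSup {c : ℝ | ∃ r > (0 : ℝ),
    c = sInf (banachCStar '' convexHull ℝ (⋃ z ∈ ball x r, Jf z))}

/-- `Δ F_y(x) = ∂‖·‖(f(x)-y) ∘ co̅(Jf(x))`. -/
def DeltaF (f : X → Y) (Jf : X → Set (X →L[ℝ] Y)) (y : Y) (x : X) :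
    Set (StrongDual ℝ X) :=
  {w | ∃ y' ∈ clarkeSubdiff (fun z : Y => ‖z‖) (f x - y),
      ∃ T ∈ closure (convexHull ℝ (Jf x)), w = ContinuousLinearMap.comp y' T}

/-- The chain rule condition for the pseudo-Jacobian mapping `Jf` of `f` on `U`. -/
def ChainRuleCond (f : X → Y) (Jf : X → Set (X →L[ℝ] Y)) (U : Set X) : Prop :=
  ∀ x ∈ U, ∀ y : Y, y ≠ f x →
    IsClosed (StrongDual.toWeakDual '' DeltaF f Jf y x) ∧
    Convex ℝ (DeltaF f Jf y x) ∧
    IsPseudoJacobianAt (fun z : X => ‖f z - y‖) x (DeltaF f Jf y x)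

/-- The strong chain rule condition: the chain rule condition, `f` locally Lipschitz,
and `Δ F_y(x)` contains the Clarke subdifferential of `F_y` at `x`. -/
def StrongChainRuleCond (f : X → Y) (Jf : X → Set (X →L[ℝ] Y)) (U : Set X) : Prop :=
  ChainRuleCond f Jf U ∧
  (∀ x ∈ U, ∃ K : NNReal, ∃ t ∈ 𝓝 x, LipschitzOnWith K f t) ∧
  ∀ x ∈ U, ∀ y : Y, y ≠ f x →
    clarkeSubdiff (fun z : X => ‖f z - y‖) x ⊆ DeltaF f Jf y x

/-- `Jf` is regular at `x₀`. -/
def RegularAt (Jf : X → Set (X →L[ℝ] Y)) (x₀ : X) : Prop :=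
  (∃ r > (0 : ℝ), ∀ T ∈ convexHull ℝ (⋃ z ∈ ball x₀ r, Jf z),
      ∃ e : X ≃L[ℝ] Y, (e : X →L[ℝ] Y) = T) ∧
  surJ Jf x₀ = injJ Jf x₀ ∧ 0 < surJ Jf x₀

/-- The regularity index `reg Jf(x₀)`. -/
def regJ (Jf : X → Set (X →L[ℝ] Y)) (x₀ : X) : ℝ := surJ Jf x₀

/-- `f` is open with linear rate around `x₀`. -/
def OpenWithLinearRateAt (f : X → Y) (x₀ : X) : Prop :=
  ∃ V ∈ 𝓝 x₀, ∃ α > (0 : ℝ), ∀ x ∈ V, ∀ r > (0 : ℝ), ball x r ⊆ V →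
    ball (f x) (α * r) ⊆ f '' ball x r

/-- `h` is a weight: continuous, nondecreasing, nonnegative on `[0,∞)`,
with `∫₀^∞ dρ/(1+h(ρ)) = ∞`. -/
def IsWeight (h : ℝ → ℝ) : Prop :=
  ContinuousOn h (Ici 0) ∧ MonotoneOn h (Ici 0) ∧ (∀ ρ ∈ Ici (0 : ℝ), 0 ≤ h ρ) ∧
  ∫⁻ ρ in Ioi (0 : ℝ), ENNReal.ofReal (1 / (1 + h ρ)) = ⊤

/-- The weighted Chang–Palais–Smale condition for `F` with respect to the weight `h`. -/
def ChangPS (F : X → ℝ) (h : ℝ → ℝ) : Prop :=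
  ∀ u : ℕ → X, (∃ M : ℝ, ∀ n, |F (u n)| ≤ M) →
    Tendsto (fun n => lambdaF F (u n) * (1 + h ‖u n‖)) atTop (𝓝 0) →
    ∃ φ : ℕ → ℕ, StrictMono φ ∧ ∃ z : X, Tendsto ((fun n => u n) ∘ φ) atTop (𝓝 z)

/-- The local Lipschitz constant of `g` at `y`. -/
def lipConstAt (g : Y → X) (y : Y) : ℝ :=
  sInf {c : ℝ | ∃ r > (0 : ℝ), c = sSup {q : ℝ | ∃ u ∈ ball y r, ∃ w ∈ ball y r,
    u ≠ w ∧ q = ‖g u - g w‖ / ‖u - w‖}}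

/-- The exact covering bound `cov f(x₀)` of `f` around `x₀`. -/
def covBound (f : X → Y) (x₀ : X) : ℝ :=
  sSup {α : ℝ | 0 ≤ α ∧ ∃ V ∈ 𝓝 x₀, ∀ x ∈ V, ∀ r > (0 : ℝ), ball x r ⊆ V →
    ball (f x) (α * r) ⊆ f '' ball x r}

/-- The Ioffe modulus of surjection `S(f,x₀)(r)`. -/
def ioffeS (f : X → Y) (x₀ : X) (r : ℝ) : ℝ :=
  sSup {ρ : ℝ | 0 ≤ ρ ∧ ball (f x₀) ρ ⊆ f '' ball x₀ r}

/-- The Ioffe constant of surjection `sur(f,x₀)`. -/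
def ioffeSur (f : X → Y) (x₀ : X) : ℝ :=
  sSup {c : ℝ | ∃ ε > (0 : ℝ),
    c = sInf {q : ℝ | ∃ r : ℝ, 0 < r ∧ r < ε ∧ q = ioffeS f x₀ r / r}}

/-!
Fix `0 < α < reg Jf(x₀)`, a ball `B(x;ρ)` near `x₀` and a target `y` with `‖f x - y‖ < α ρ`.
Ekeland's variational principle applied to `u ↦ ‖f u - y‖` with slope `α` gives a point `z` of
`B(x;ρ)` at which the upper Dini derivative in every direction `v` is `≥ -α ‖v‖`. If `f z ≠ y`, the
chain rule makes `Δ F_y(z)` a weak*-closed convex pseudo-Jacobian whose elements all have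
norm `> α`: a Clarke subgradient of the norm away from `0` has norm `1`, so these norms are bounded
below by Banach constants of operators in `co Jf(B(x₀;r))`. Separating `Δ F_y(z)` from the
weak*-compact ball of radius `α` produces a direction of steeper descent, a contradiction. Hence
`f z = y`, i.e. `f` covers at rate `α` near `x₀`. The local Lipschitz bound on `f` keeps all the
suprema involved finite, and covering near `x₀` bounds the Ioffe modulus at `x₀`.
-/

section Ekeland

variable {Z : Type*} [MetricSpace Z] {F : Z → ℝ} {α : ℝ}

def ekelandSet (F : Z → ℝ) (α : ℝ) (y : Z) : Set Z :=
  {u | F u + α * dist u y ≤ F y}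

lemma mem_ekelandSet {u y : Z} : u ∈ ekelandSet F α y ↔ F u + α * dist u y ≤ F y :=
  Iff.rfl

lemma self_mem_ekelandSet (y : Z) : y ∈ ekelandSet F α y := by
  simp [ekelandSet]

lemma ekelandSet_subset_of_mem (hα : 0 ≤ α) {u y : Z} (hu : u ∈ ekelandSet F α y) :
    ekelandSet F α u ⊆ ekelandSet F α y := fun v hv => by
  have := mul_le_mul_of_nonneg_left (dist_triangle v u y) hα
  rw [mem_ekelandSet] at hu hv ⊢
  linarith

lemma isClosed_ekelandSet (hF : Continuous F) (y : Z) : IsClosed (ekelandSet F α y) :=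
  isClosed_le (by fun_prop) continuous_const

lemma ekelandSet_subset_closedBall (hα : 0 < α) {y : Z} {ε : ℝ}
    (hy : ∀ u ∈ ekelandSet F α y, F y ≤ F u + ε) :
    ekelandSet F α y ⊆ closedBall y (ε / α) := fun u hu => by
  have := hy u hu
  rw [mem_ekelandSet] at hu
  rw [mem_closedBall, le_div_iff₀' hα]
  linarith

lemma exists_seq_ekelandSet (hF : BddBelow (range F)) (x : Z) :
    ∃ z : ℕ → Z, z 0 = x ∧ ∀ n, z (n + 1) ∈ ekelandSet F α (z n) ∧
      ∀ u ∈ ekelandSet F α (z n), F (z (n + 1)) ≤ F u + (1 / 2) ^ n := by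
  have hnext (n : ℕ) (y : Z) : ∃ u ∈ ekelandSet F α y,
      ∀ v ∈ ekelandSet F α y, F u ≤ F v + (1 / 2) ^ n := by
    have hbdd : BddBelow (F '' ekelandSet F α y) := hF.mono (image_subset_range _ _)
    obtain ⟨_, ⟨u, hu, rfl⟩, hlt⟩ :=
      exists_lt_of_csInf_lt ((nonempty_of_mem (self_mem_ekelandSet y)).image F)
        (lt_add_of_pos_right (sInf (F '' ekelandSet F α y)) (by positivity : (0 : ℝ) < (1 / 2) ^ n))
    exact ⟨u, hu, fun v hv => hlt.le.trans (by gcongr; exact csInf_le hbdd (mem_image_of_mem F hv))⟩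
  choose next hnext_mem hnext_le using hnext
  exact ⟨fun n => Nat.rec x (fun n y => next n y) n, rfl,
    fun n => ⟨hnext_mem _ _, hnext_le _ _⟩⟩

theorem exists_ekeland_point [CompleteSpace Z] (hF : Continuous F) (hFb : BddBelow (range F))
    (hα : 0 < α) (x : Z) :
    ∃ z, F z + α * dist z x ≤ F x ∧ ∀ u, F z ≤ F u + α * dist u z := by
  obtain ⟨z, hz0, hz⟩ := exists_seq_ekelandSet (α := α) hFb x
  set s : ℕ → Set Z := fun n => ekelandSet F α (z (n + 1))
  have hsmall (n : ℕ) : s n ⊆ closedBall (z (n + 1)) ((1 / 2) ^ n / α) :=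
    ekelandSet_subset_closedBall hα fun u hu =>
      (hz n).2 u (ekelandSet_subset_of_mem hα.le (hz n).1 hu)
  have hanti : Antitone s :=
    antitone_nat_of_succ_le fun n => ekelandSet_subset_of_mem hα.le (hz (n + 1)).1
  have hdiam : Tendsto (fun n => diam (s n)) atTop (𝓝 0) := by
    refine squeeze_zero (fun n => diam_nonneg) (fun n => (diam_mono (hsmall n)
      isBounded_closedBall).trans (diam_closedBall (by positivity))) ?_
    simpa using ((tendsto_pow_atTop_nhds_zero_of_lt_one (by norm_num : (0 : ℝ) ≤ 1 / 2)
      (by norm_num)).div_const α).const_mul 2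
  obtain ⟨w, hw⟩ := nonempty_iInter_of_nonempty_biInter (fun n => isClosed_ekelandSet hF _)
    (fun n => isBounded_closedBall.subset (hsmall n))
    (fun N => ⟨z (N + 1), mem_iInter₂.2 fun n hn => hanti hn (self_mem_ekelandSet _)⟩) hdiam
  rw [mem_iInter] at hw
  refine ⟨w, hz0 ▸ ekelandSet_subset_of_mem hα.le (hz 0).1 (hw 0), fun u => ?_⟩
  by_contra! hu
  have hus (n : ℕ) : u ∈ s n := ekelandSet_subset_of_mem hα.le (hw n) hu.le
  have hdist : dist u w ≤ 0 := ge_of_tendsto' hdiam fun n =>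
    dist_le_diam_of_mem (isBounded_closedBall.subset (hsmall n)) (hus n) (hw n)
  rw [dist_le_zero.1 hdist] at hu
  simp at hu

end Ekeland

section DiniDerivative

/-- A real `limsup` of a function unbounded above is `0`, hence the hypothesis `b ≤ 0`. -/
lemma le_limsup_of_eventually_le_of_nonpos {ι : Type*} {l : Filter ι} [l.NeBot] {g : ι → ℝ}
    {b : ℝ} (hb : b ≤ 0) (h : ∀ᶠ i in l, b ≤ g i) : b ≤ limsup g l := by
  by_cases hg : IsBoundedUnder (· ≤ ·) l g
  · exact le_limsup_of_frequently_le h.frequently hg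
  · rwa [Real.limsup_of_not_isBoundedUnder hg]

lemma neg_mul_norm_le_diniPlus {φ : X → ℝ} {x : X} {c : ℝ} (hc : 0 ≤ c)
    (h : ∀ u, φ x ≤ φ u + c * dist u x) (v : X) : -(c * ‖v‖) ≤ diniPlus φ x v := by
  refine le_limsup_of_eventually_le_of_nonpos (neg_nonpos.2 (by positivity)) ?_
  filter_upwards [self_mem_nhdsWithin] with t (ht : 0 < t)
  have := h (x + t • v)
  rw [dist_self_add_left, norm_smul, Real.norm_of_nonneg ht.le] at this
  rw [le_div_iff₀ ht]
  linarith

lemma exists_apply_le_lt_neg_mul_norm {Δ : Set (StrongDual ℝ X)} (hconv : Convex ℝ Δ)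
    (hclosed : IsClosed (StrongDual.toWeakDual '' Δ)) {c m : ℝ} (hc : 0 ≤ c) (hcm : c < m)
    (hnorm : ∀ w ∈ Δ, m ≤ ‖w‖) : ∃ v : X, ∃ t < -(c * ‖v‖), ∀ w ∈ Δ, w v ≤ t := by
  have : LocallyConvexSpace ℝ (WeakDual ℝ X) := WeakBilin.locallyConvexSpace
  let K : Set (WeakDual ℝ X) := WeakDual.toStrongDual ⁻¹' closedBall 0 c
  have hdisj : Disjoint K (StrongDual.toWeakDual '' Δ) := by
    rw [disjoint_left]
    rintro _ hK ⟨w, hw, rfl⟩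
    have : ‖w‖ ≤ c := by simpa [K] using hK
    linarith [hnorm w hw]
  obtain ⟨g, s, t, hgK, hst, hgΔ⟩ := geometric_hahn_banach_compact_closed
    ((convex_closedBall (0 : StrongDual ℝ X) c).linear_preimage
      (WeakDual.toStrongDual : WeakDual ℝ X ≃ₗ[ℝ] StrongDual ℝ X).toLinearMap)
    (WeakDual.isCompact_closedBall 0 c) (hconv.linear_image StrongDual.toWeakDual.toLinearMap)
    hclosed hdisj
  -- weak*-continuous functionals are evaluations
  obtain ⟨v, rfl⟩ := LinearMap.dualEmbedding_surjective (topDualPairing ℝ X) g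
  obtain ⟨g₀, hg₀, hg₀v⟩ := exists_dual_vector'' ℝ v
  have hvs : c * ‖v‖ < s := by
    have : (c • g₀) v < s := hgK (StrongDual.toWeakDual (c • g₀)) (by
      simpa [K, norm_smul, abs_of_nonneg hc] using mul_le_of_le_one_right hc hg₀)
    simpa [hg₀v] using this
  refine ⟨-v, -t, by rw [norm_neg]; linarith, fun w hw => ?_⟩
  have : t < w v := hgΔ _ (mem_image_of_mem _ hw)
  rw [map_neg]
  linarith

lemma IsPseudoJacobianAt.exists_diniPlus_lt {φ : X → ℝ} {x : X} {Δ : Set (StrongDual ℝ X)}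
    (hΔ : IsPseudoJacobianAt φ x Δ) (hconv : Convex ℝ Δ)
    (hclosed : IsClosed (StrongDual.toWeakDual '' Δ)) {c m : ℝ} (hc : 0 ≤ c) (hcm : c < m)
    (hnorm : ∀ w ∈ Δ, m ≤ ‖w‖) : ∃ v, diniPlus φ x v < -(c * ‖v‖) := by
  obtain ⟨v, t, ht, hv⟩ := exists_apply_le_lt_neg_mul_norm hconv hclosed hc hcm hnorm
  refine ⟨v, lt_of_le_of_lt ?_ ht⟩
  calc diniPlus φ x v ≤ sSup ((fun w : StrongDual ℝ X => w v) '' Δ) :=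
        hΔ.2 (ContinuousLinearMap.id ℝ ℝ) v
    _ ≤ t := csSup_le (hΔ.1.image _) (forall_mem_image.2 hv)

end DiniDerivative

section ClarkeNorm

lemma eventually_abs_clarkeQuotient_norm_le (u v : Y) :
    ∀ᶠ p : Y × ℝ in 𝓝 u ×ˢ 𝓝[>] 0, |(‖p.1 + p.2 • v‖ - ‖p.1‖) / p.2| ≤ ‖v‖ := by
  filter_upwards [prod_mem_prod univ_mem self_mem_nhdsWithin] with p hp
  replace hp : 0 < p.2 := hp.2
  rw [abs_div, abs_of_pos hp, div_le_iff₀ hp]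
  calc |‖p.1 + p.2 • v‖ - ‖p.1‖| ≤ ‖p.2 • v‖ := by
        simpa using abs_norm_sub_norm_le (p.1 + p.2 • v) p.1
    _ = ‖v‖ * p.2 := by rw [norm_smul, Real.norm_of_nonneg hp.le, mul_comm]

lemma clarkeDeriv_norm_le (u v : Y) : clarkeDeriv (fun z : Y => ‖z‖) u v ≤ ‖v‖ := by
  have h := eventually_abs_clarkeQuotient_norm_le u v
  exact limsup_le_of_le (isBoundedUnder_of_eventually_ge
    (h.mono fun p hp => (abs_le.1 hp).1)).isCoboundedUnder_le (h.mono fun p hp => (abs_le.1 hp).2)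

lemma clarkeDeriv_norm_neg_self_le (u : Y) :
    clarkeDeriv (fun z : Y => ‖z‖) u (-u) ≤ -‖u‖ := by
  have hlim : Tendsto (fun p : Y × ℝ => ‖p.1 - u‖ - ‖p.1‖) (𝓝 u ×ˢ 𝓝[>] 0) (𝓝 (-‖u‖)) := by
    have : Tendsto (fun y : Y => ‖y - u‖ - ‖y‖) (𝓝 u) (𝓝 (‖u - u‖ - ‖u‖)) :=
      (by fun_prop : Continuous fun y : Y => ‖y - u‖ - ‖y‖).tendsto u
    simpa [Function.comp_def] using this.comp tendsto_fst
  rw [← hlim.limsup_eq]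
  have h := eventually_abs_clarkeQuotient_norm_le u (-u)
  refine limsup_le_limsup ?_ (isBoundedUnder_of_eventually_ge
    (h.mono fun p hp => (abs_le.1 hp).1)).isCoboundedUnder_le hlim.isBoundedUnder_le
  -- for `0 < t ≤ 1`, convexity of the norm bounds the quotient by `‖p.1 - u‖ - ‖p.1‖`
  filter_upwards [prod_mem_prod univ_mem (Ioc_mem_nhdsGT one_pos)] with p hp
  obtain ⟨ht0, ht1⟩ : 0 < p.2 ∧ p.2 ≤ 1 := hp.2
  have hseg : p.1 + p.2 • -u = (1 - p.2) • p.1 + p.2 • (p.1 - u) := by module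
  have := norm_add_le ((1 - p.2) • p.1) (p.2 • (p.1 - u))
  rw [norm_smul, norm_smul, Real.norm_of_nonneg ht0.le, Real.norm_of_nonneg (sub_nonneg.2 ht1),
    ← hseg] at this
  rw [div_le_iff₀ ht0]
  linarith

lemma norm_eq_one_of_mem_clarkeSubdiff_norm {u : Y} (hu : u ≠ 0) {y' : StrongDual ℝ Y}
    (hy' : y' ∈ clarkeSubdiff (fun z : Y => ‖z‖) u) : ‖y'‖ = 1 := by
  have hle : ‖y'‖ ≤ 1 := y'.opNorm_le_bound zero_le_one fun v => by
    have h₁ := (hy' v).trans (clarkeDeriv_norm_le u v)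
    have h₂ := (hy' (-v)).trans (clarkeDeriv_norm_le u (-v))
    rw [map_neg, norm_neg] at h₂
    rw [one_mul, Real.norm_eq_abs, abs_le]
    constructor <;> linarith
  have hge : ‖u‖ ≤ ‖y'‖ * ‖u‖ := by
    have := (hy' (-u)).trans (clarkeDeriv_norm_neg_self_le u)
    rw [map_neg] at this
    linarith [(le_abs_self (y' u)).trans (y'.le_opNorm u)]
  exact le_antisymm hle ((le_mul_iff_one_le_left (norm_pos_iff.2 hu)).1 hge)

end ClarkeNorm

section BanachConstant

lemma banachC_nonneg (T : X →L[ℝ] Y) : 0 ≤ banachC T :=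
  Real.sInf_nonneg (forall_mem_image.2 fun _ _ => norm_nonneg _)

lemma banachC_le_norm_comp {y' : StrongDual ℝ Y} (hy' : ‖y'‖ = 1) (T : X →L[ℝ] Y) :
    banachC T ≤ ‖y'.comp T‖ :=
  csInf_le ⟨0, forall_mem_image.2 fun _ _ => norm_nonneg _⟩ (mem_image_of_mem _ hy')

lemma banachC_le_add_norm_sub [Nontrivial Y] (T S : X →L[ℝ] Y) :
    banachC T ≤ banachC S + ‖T - S‖ := by
  obtain ⟨y₀', hy₀'⟩ := (NormedSpace.sphere_nonempty (x := (0 : StrongDual ℝ Y))).2 zero_le_one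
  rw [← sub_le_iff_le_add]
  refine le_csInf ⟨_, mem_image_of_mem _ (show ‖y₀'‖ = 1 by simpa using hy₀')⟩
    (forall_mem_image.2 fun y' hy' => ?_)
  rw [sub_le_iff_le_add]
  calc banachC T ≤ ‖y'.comp T‖ := banachC_le_norm_comp hy' T
    _ = ‖y'.comp S + y'.comp (T - S)‖ := by rw [← ContinuousLinearMap.comp_add, add_sub_cancel]
    _ ≤ ‖y'.comp S‖ + ‖y'‖ * ‖T - S‖ :=
        (norm_add_le _ _).trans (by gcongr; exact y'.opNorm_comp_le _)
    _ = ‖y'.comp S‖ + ‖T - S‖ := by rw [show ‖y'‖ = 1 from hy', one_mul]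

lemma lipschitzWith_banachC [Nontrivial Y] : LipschitzWith 1 (banachC : (X →L[ℝ] Y) → ℝ) :=
  LipschitzWith.of_le_add fun T S => by
    rw [dist_eq_norm]
    exact banachC_le_add_norm_sub T S

lemma le_banachC_of_mem_closure [Nontrivial Y] {s : Set (X →L[ℝ] Y)} {m : ℝ}
    (h : ∀ S ∈ s, m ≤ banachC S) {T : X →L[ℝ] Y} (hT : T ∈ closure s) : m ≤ banachC T :=
  closure_minimal h (isClosed_le continuous_const lipschitzWith_banachC.continuous) hT

lemma le_norm_of_mem_DeltaF [Nontrivial Y] {f : X → Y} {Jf : X → Set (X →L[ℝ] Y)} {y : Y}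
    {z : X} (hy : f z ≠ y) {m : ℝ} (hm : ∀ T ∈ convexHull ℝ (Jf z), m ≤ banachC T)
    {w : StrongDual ℝ X} (hw : w ∈ DeltaF f Jf y z) : m ≤ ‖w‖ := by
  obtain ⟨y', hy', T, hT, rfl⟩ := hw
  exact (le_banachC_of_mem_closure hm hT).trans
    (banachC_le_norm_comp (norm_eq_one_of_mem_clarkeSubdiff_norm (sub_ne_zero.2 hy) hy') T)

lemma surJ_nonpos_of_subsingleton [Subsingleton Y] (Jf : X → Set (X →L[ℝ] Y)) (x : X) :
    surJ Jf x ≤ 0 := by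
  have hC (T : X →L[ℝ] Y) : banachC T ≤ 0 :=
    Real.sInf_nonpos (forall_mem_image.2 fun y' (hy' : ‖y'‖ = 1) => by
      simp [Subsingleton.elim y' 0] at hy')
  exact Real.sSup_nonpos fun _ ⟨_, _, hc⟩ =>
    hc ▸ Real.sInf_nonpos (forall_mem_image.2 fun T _ => hC T)

lemma nontrivial_of_surJ_pos {Jf : X → Set (X →L[ℝ] Y)} {x : X} (h : 0 < surJ Jf x) :
    Nontrivial Y :=
  not_subsingleton_iff_nontrivial.1 fun _ => h.not_ge (surJ_nonpos_of_subsingleton Jf x)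

end BanachConstant

section CoveringRates

variable {M N : Type*} [PseudoMetricSpace M] [PseudoMetricSpace N]

def coveringRates (f : M → N) (x₀ : M) : Set ℝ :=
  {α | 0 ≤ α ∧ ∃ V ∈ 𝓝 x₀, ∀ x ∈ V, ∀ r > (0 : ℝ), ball x r ⊆ V →
    ball (f x) (α * r) ⊆ f '' ball x r}

lemma zero_mem_coveringRates (f : M → N) (x₀ : M) : 0 ∈ coveringRates f x₀ :=
  ⟨le_rfl, univ, univ_mem, fun x _ r _ _ => by simp⟩

end CoveringRates

section Covering

theorem ball_subset_image_ball_of_forall_diniPlus_lt [CompleteSpace X] {E : Type*}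
    [SeminormedAddCommGroup E] {f : X → E}
    (hf : Continuous f) {V : Set X} {c : ℝ} (hc : 0 < c)
    (hdesc : ∀ z ∈ V, ∀ y, f z ≠ y → ∃ v, diniPlus (fun u => ‖f u - y‖) z v < -(c * ‖v‖))
    {x : X} {ρ : ℝ} (hV : ball x ρ ⊆ V) : ball (f x) (c * ρ) ⊆ f '' ball x ρ := by
  intro y hy
  obtain ⟨z, hzx, hmin⟩ := exists_ekeland_point (F := fun u => ‖f u - y‖) (by fun_prop)
    ⟨0, forall_mem_range.2 fun _ => norm_nonneg _⟩ hc x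
  have hz : z ∈ ball x ρ := by
    rw [mem_ball, dist_comm, dist_eq_norm] at hy
    rw [mem_ball, ← mul_lt_mul_iff_right₀ hc]
    linarith [norm_nonneg (f z - y)]
  refine ⟨z, hz, by_contra fun hzy => ?_⟩
  obtain ⟨v, hv⟩ := hdesc z (hV hz) y hzy
  linarith [neg_mul_norm_le_diniPlus (φ := fun u => ‖f u - y‖) hc.le hmin v]

lemma mem_coveringRates_of_lt_surJ [CompleteSpace X] [Nontrivial Y] {f : X → Y}
    (hf : Continuous f) {Jf : X → Set (X →L[ℝ] Y)} (hcr : ChainRuleCond f Jf univ) {x₀ : X}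
    {α : ℝ} (hα : 0 < α) (hαJ : α < surJ Jf x₀) : α ∈ coveringRates f x₀ := by
  obtain ⟨_, ⟨r, hr, rfl⟩, hαr⟩ := exists_lt_of_lt_csSup (by exact ⟨_, 1, one_pos, rfl⟩) hαJ
  refine ⟨hα.le, ball x₀ r, ball_mem_nhds x₀ hr, fun x _ ρ _ hsub =>
    ball_subset_image_ball_of_forall_diniPlus_lt hf hα (fun z hz y hzy => ?_) hsub⟩
  obtain ⟨hclosed, hconv, hpj⟩ := hcr z trivial y (Ne.symm hzy)
  refine hpj.exists_diniPlus_lt hconv hclosed hα.le hαr fun w hw =>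
    le_norm_of_mem_DeltaF hzy (fun T hT => ?_) hw
  exact csInf_le ⟨0, forall_mem_image.2 fun S _ => banachC_nonneg S⟩
    (mem_image_of_mem _ (convexHull_mono (subset_biUnion_of_mem hz) hT))

end Covering

section LipschitzBounds

variable [Nontrivial Y] {K : NNReal} {δ : ℝ}

lemma le_of_ball_subset_closedBall {y : Y} {ρ R : ℝ} (hR : 0 ≤ R)
    (h : ball y ρ ⊆ closedBall y R) : ρ ≤ R := by
  by_contra! hρ
  obtain ⟨z, hz⟩ := (NormedSpace.sphere_nonempty (x := y)).2 (by linarith : 0 ≤ (R + ρ) / 2)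
  have := h (mem_ball.2 (by rw [mem_sphere.1 hz]; linarith))
  rw [mem_closedBall, mem_sphere.1 hz] at this
  linarith

lemma le_mul_of_ball_subset_image_ball {M : Type*} [PseudoMetricSpace M] {f : M → Y} {x₀ : M}
    (hlip : LipschitzOnWith K f (ball x₀ δ)) {r ρ : ℝ}
    (hr0 : 0 < r) (hr : r ≤ δ) (h : ball (f x₀) ρ ⊆ f '' ball x₀ r) : ρ ≤ K * r := by
  refine le_of_ball_subset_closedBall (by positivity) (h.trans ?_)
  rintro _ ⟨u, hu, rfl⟩
  have hsub : ball x₀ r ⊆ ball x₀ δ := ball_subset_ball hr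
  exact mem_closedBall.2 ((hlip.dist_le_mul u (hsub hu) x₀ (hsub (mem_ball_self hr0))).trans
    (by gcongr; exact (mem_ball.1 hu).le))

variable {E : Type*} [NormedAddCommGroup E] {f : E → Y} {x₀ : E}

lemma ioffeS_le (hlip : LipschitzOnWith K f (ball x₀ δ)) {r : ℝ} (hr0 : 0 < r) (hr : r ≤ δ) :
    ioffeS f x₀ r ≤ K * r :=
  Real.sSup_le (fun _ hρ => le_mul_of_ball_subset_image_ball hlip hr0 hr hρ.2) (by positivity)

lemma eventually_mul_le_ioffeS (hlip : LipschitzOnWith K f (ball x₀ δ)) (hδ : 0 < δ) {α : ℝ}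
    (hα : α ∈ coveringRates f x₀) : ∀ᶠ r in 𝓝[>] 0, α * r ≤ ioffeS f x₀ r := by
  obtain ⟨hα0, V, hV, hcov⟩ := hα
  obtain ⟨ε, hε, hεV⟩ := Metric.mem_nhds_iff.1 hV
  filter_upwards [Ioo_mem_nhdsGT (lt_min hε hδ)] with r ⟨hr0, hr⟩
  have hball : ball x₀ r ⊆ V := (ball_subset_ball (hr.le.trans (min_le_left _ _))).trans hεV
  exact le_csSup ⟨K * r, fun _ hρ => le_mul_of_ball_subset_image_ball hlip hr0
    (hr.le.trans (min_le_right _ _)) hρ.2⟩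
    ⟨by positivity, hcov x₀ (hεV (mem_ball_self hε)) r hr0 hball⟩

lemma le_of_mem_coveringRates (hlip : LipschitzOnWith K f (ball x₀ δ)) (hδ : 0 < δ) {α : ℝ}
    (hα : α ∈ coveringRates f x₀) : α ≤ K := by
  obtain ⟨r, hαr, hr0, hr⟩ :=
    ((eventually_mul_le_ioffeS hlip hδ hα).and (Ioo_mem_nhdsGT hδ)).exists
  exact le_of_mul_le_mul_right (hαr.trans (ioffeS_le hlip hr0 hr.le)) hr0

lemma le_ioffeSur (hlip : LipschitzOnWith K f (ball x₀ δ)) (hδ : 0 < δ) {α : ℝ}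
    (hα : ∀ᶠ r in 𝓝[>] 0, α * r ≤ ioffeS f x₀ r) : α ≤ ioffeSur f x₀ := by
  have hbdd (ε : ℝ) : BddBelow {q : ℝ | ∃ r : ℝ, 0 < r ∧ r < ε ∧ q = ioffeS f x₀ r / r} :=
    ⟨0, fun _ ⟨r, hr0, _, hq⟩ => hq ▸ div_nonneg (Real.sSup_nonneg fun _ hρ => hρ.1) hr0.le⟩
  have hK : BddAbove {c : ℝ | ∃ ε > (0 : ℝ),
      c = sInf {q : ℝ | ∃ r : ℝ, 0 < r ∧ r < ε ∧ q = ioffeS f x₀ r / r}} := by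
    refine ⟨K, fun _ ⟨ε, hε, hc⟩ => hc ▸ ?_⟩
    have hr0 : 0 < min (ε / 2) δ := lt_min (half_pos hε) hδ
    refine (csInf_le (hbdd ε) ⟨_, hr0, (min_le_left _ _).trans_lt (half_lt_self hε), rfl⟩).trans ?_
    exact (div_le_iff₀ hr0).2 (ioffeS_le hlip hr0 (min_le_right _ _))
  obtain ⟨ε, hε, hεα⟩ := mem_nhdsGT_iff_exists_Ioo_subset.1 hα
  refine le_trans ?_ (le_csSup hK ⟨ε, hε, rfl⟩)
  refine le_csInf ⟨_, ε / 2, half_pos hε, half_lt_self hε, rfl⟩ fun _ ⟨r, hr0, hr, hq⟩ => ?_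
  exact hq ▸ (le_div_iff₀ hr0).2 (hεα ⟨hr0, hr⟩)

end LipschitzBounds

theorem sur_ge_cov_ge_reg_general {X Y : Type*}
    [NormedAddCommGroup X] [NormedSpace ℝ X] [CompleteSpace X]
    [NormedAddCommGroup Y] [NormedSpace ℝ Y]
    (f : X → Y) (hf : LocallyLipschitz f)
    (Jf : X → Set (X →L[ℝ] Y))
    (hcr : ChainRuleCond f Jf Set.univ) (x₀ : X) (hreg : RegularAt Jf x₀) :
    regJ Jf x₀ ≤ covBound f x₀ ∧ covBound f x₀ ≤ ioffeSur f x₀ := by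
  have hpos : 0 < surJ Jf x₀ := hreg.2.2
  have := nontrivial_of_surJ_pos hpos
  obtain ⟨K, t, ht, hlip⟩ := hf x₀
  obtain ⟨δ, hδ, hδt⟩ := Metric.mem_nhds_iff.1 ht
  replace hlip := hlip.mono hδt
  have hbdd : BddAbove (coveringRates f x₀) :=
    ⟨K, fun _ hα => le_of_mem_coveringRates hlip hδ hα⟩
  have hcov : covBound f x₀ = sSup (coveringRates f x₀) := rfl
  rw [hcov]
  constructor
  · refine le_of_forall_lt_imp_le_of_dense fun α hα => ?_
    rcases le_or_gt α 0 with hα0 | hα0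
    · exact hα0.trans (le_csSup hbdd (zero_mem_coveringRates f x₀))
    · exact le_csSup hbdd (mem_coveringRates_of_lt_surJ hf.continuous hcr hα0 hα)
  · exact csSup_le ⟨0, zero_mem_coveringRates f x₀⟩ fun _ hα =>
      le_ioffeSur hlip hδ (eventually_mul_le_ioffeS hlip hδ hα)

/-- If `f : X → Y` is locally Lipschitz with a pseudo-Jacobian mapping `Jf` satisfying the
chain rule condition on `X`, and `Jf` is regular at `x₀`, then
`sur(f,x₀) ≥ cov f(x₀) ≥ reg Jf(x₀)`. -/
theorem sur_ge_cov_ge_reg {X Y : Type*}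
    [NormedAddCommGroup X] [NormedSpace ℝ X] [CompleteSpace X]
    [NormedAddCommGroup Y] [NormedSpace ℝ Y] [CompleteSpace Y]
    (f : X → Y) (hf : LocallyLipschitz f)
    (Jf : X → Set (X →L[ℝ] Y)) (hJf : ∀ x : X, IsPseudoJacobianAt f x (Jf x))
    (hcr : ChainRuleCond f Jf Set.univ) (x₀ : X) (hreg : RegularAt Jf x₀) :
    regJ Jf x₀ ≤ covBound f x₀ ∧ covBound f x₀ ≤ ioffeSur f x₀ :=
  sur_ge_cov_ge_reg_general f hf Jf hcr x₀ hreg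
end
end

section
/- Let X be a real Banach space, F : X → ℝ a locally Lipschitz functional bounded from below, and h any weight. Then there exists a sequence {xₙ} in X such that F(xₙ) → inf_X F and λ_F(xₙ)(1 + h(‖xₙ‖)) → 0. -/
open Filter Topology Metric Set MeasureTheory

noncomputable section

variable {X Y : Type*} [NormedAddCommGroup X] [NormedSpace ℝ X]
  [NormedAddCommGroup Y] [NormedSpace ℝ Y]

/-!
It suffices to find, for every `ε > 0` and `x₀` (taken with `F x₀ < inf F + ε`), a point `x`
with `F x ≤ F x₀` and `λ_F(x) (1 + h ‖x‖) ≤ ε`. Suppose instead `ε < λ_F(x) (1 + h ‖x‖)` whenever `F x ≤ F x₀`. If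
`0 ≤ c < λ_F(x)`, some unit vector `v` has `F°(x; v) < -c`: otherwise `F°(x; ·)` is a sublinear
functional bounded below by `-c ‖·‖`, and Hahn–Banach applied to its infimal convolution with
`c ‖·‖` yields an element of `∂F(x)` of norm at most `c`. As `F°` is a limsup over base points
near `x` too, descent at rate `c` along `v` with a fixed step length holds on a whole neighbourhood.

Starting from `x₀`, walk greedily: at `y` with `‖y‖ ≤ s`, take a unit-speed segment of length `t`
(at least half the longest admissible one) along which `F` drops at rate `ε / (1 + h s)`, and
replace `s` by `s + t`. Then `F y + ε ∫₀ˢ dρ / (1 + h ρ)` never increases, so the divergence of the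
weight integral bounds the total length of the walk. The walk therefore converges in the complete
space `X` and its step lengths tend to `0`, whereas near the limit point a fixed step length stays
admissible: this contradicts greediness.
-/

theorem exists_seq_of_forall_exists_step {α : Type*} {P : α → Prop} {R : α → α → Prop}
    (step : ∀ a, P a → ∃ b, P b ∧ R a b) {a₀ : α} (h₀ : P a₀) :
    ∃ u : ℕ → α, u 0 = a₀ ∧ ∀ n, P (u n) ∧ R (u n) (u (n + 1)) := by
  choose next hnext using fun a : {a // P a} => step a a.2
  let u : ℕ → {a // P a} := fun n => (fun a => ⟨next a, (hnext a).1⟩)^[n] ⟨a₀, h₀⟩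
  refine ⟨fun n => u n, rfl, fun n => ⟨(u n).2, ?_⟩⟩
  simpa only [u, Function.iterate_succ_apply'] using (hnext (u n)).2

theorem exists_mem_forall_le_two_mul {S : Set ℝ} (hne : S.Nonempty) (hbdd : BddAbove S)
    (hpos : ∀ t ∈ S, 0 < t) : ∃ t ∈ S, ∀ t' ∈ S, t' ≤ 2 * t := by
  have hsup : 0 < sSup S := (hpos _ hne.some_mem).trans_le (le_csSup hbdd hne.some_mem)
  obtain ⟨t, htS, ht⟩ := exists_lt_of_lt_csSup hne (half_lt_self hsup)
  exact ⟨t, htS, fun t' ht' => by linarith [le_csSup hbdd ht']⟩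

theorem summable_sub_of_monotone_of_bddAbove {s : ℕ → ℝ} (hs : Monotone s)
    (hbdd : BddAbove (range s)) : Summable fun n => s (n + 1) - s n := by
  obtain ⟨S, hS⟩ := hbdd
  refine summable_of_sum_range_le (c := S - s 0) (fun n => sub_nonneg.2 (hs n.le_succ))
    fun n => ?_
  rw [Finset.sum_range_sub]
  linarith [hS (mem_range_self n)]

section InfConvolution

variable {E : Type*} [SeminormedAddCommGroup E] {p : E → ℝ} {c : ℝ}

def infConvNorm (p : E → ℝ) (c : ℝ) (v : E) : ℝ := ⨅ u, (p u + c * ‖v - u‖)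

theorem neg_mul_norm_le_add_mul_norm (hc : 0 ≤ c) (hpc : ∀ v, -(c * ‖v‖) ≤ p v) (u v : E) :
    -(c * ‖v‖) ≤ p u + c * ‖v - u‖ := by
  have := mul_le_mul_of_nonneg_left (norm_le_norm_add_norm_sub v u) hc
  linarith [hpc u]

theorem infConvNorm_le (hc : 0 ≤ c) (hpc : ∀ v, -(c * ‖v‖) ≤ p v) (u v : E) :
    infConvNorm p c v ≤ p u + c * ‖v - u‖ :=
  ciInf_le ⟨_, forall_mem_range.2 (neg_mul_norm_le_add_mul_norm hc hpc · v)⟩ u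

theorem infConvNorm_smul [NormedSpace ℝ E] (hp : ∀ a : ℝ, 0 < a → ∀ v, p (a • v) = a * p v)
    {a : ℝ} (ha : 0 < a) (v : E) : infConvNorm p c (a • v) = a * infConvNorm p c v := by
  have hsurj : Function.Surjective fun u : E => a • u :=
    fun u => ⟨a⁻¹ • u, smul_inv_smul₀ ha.ne' u⟩
  rw [infConvNorm, infConvNorm, Real.mul_iInf_of_nonneg ha.le,
    ← hsurj.iInf_comp fun u => p u + c * ‖a • v - u‖]
  congr 1
  funext u
  rw [hp a ha, ← smul_sub, norm_smul, Real.norm_of_nonneg ha.le]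
  ring

theorem infConvNorm_add_le (hc : 0 ≤ c) (hpc : ∀ v, -(c * ‖v‖) ≤ p v)
    (hp : ∀ u v, p (u + v) ≤ p u + p v) (v w : E) :
    infConvNorm p c (v + w) ≤ infConvNorm p c v + infConvNorm p c w := by
  refine le_ciInf_add_ciInf (g := fun u => p u + c * ‖v - u‖) (h := fun u => p u + c * ‖w - u‖)
    fun u u' => (infConvNorm_le hc hpc (u + u') _).trans ?_
  have : ‖v + w - (u + u')‖ ≤ ‖v - u‖ + ‖w - u'‖ := by
    rw [add_sub_add_comm]; exact norm_add_le _ _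
  linarith [hp u u', mul_le_mul_of_nonneg_left this hc]

theorem exists_dual_le_of_sublinear [NormedSpace ℝ E]
    (hp_smul : ∀ a : ℝ, 0 < a → ∀ v, p (a • v) = a * p v)
    (hp_add : ∀ u v, p (u + v) ≤ p u + p v) (hc : 0 ≤ c) (hpc : ∀ v, -(c * ‖v‖) ≤ p v) :
    ∃ w : StrongDual ℝ E, (∀ v, w v ≤ p v) ∧ ‖w‖ ≤ c := by
  have hp0 : p 0 = 0 := by
    have := hp_smul 2 two_pos 0
    rw [smul_zero] at this
    linarith
  have hq_le_norm : ∀ v, infConvNorm p c v ≤ c * ‖v‖ := fun v => by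
    simpa [hp0] using infConvNorm_le hc hpc 0 v
  obtain ⟨g, -, hg⟩ := exists_extension_of_le_sublinear ⟨⊥, 0⟩ (infConvNorm p c)
    (fun a ha v => infConvNorm_smul hp_smul ha v) (infConvNorm_add_le hc hpc hp_add) <| by
      rintro ⟨x, hx⟩
      obtain rfl := (Submodule.mem_bot ℝ).1 hx
      simpa [infConvNorm] using le_ciInf (neg_mul_norm_le_add_mul_norm hc hpc · (0 : E))
  have hgc : ∀ v, ‖g v‖ ≤ c * ‖v‖ := fun v => by
    have := (hg (-v)).trans (hq_le_norm (-v))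
    rw [map_neg, norm_neg] at this
    exact abs_le.2 ⟨by linarith, (hg v).trans (hq_le_norm v)⟩
  exact ⟨g.mkContinuous c hgc, fun v => (hg v).trans (by simpa using infConvNorm_le hc hpc v v),
    LinearMap.mkContinuous_norm_le g hc hgc⟩

end InfConvolution

section Clarke

variable {F : X → ℝ}

abbrev clarkeFilter (x : X) : Filter (X × ℝ) := (𝓝 x) ×ˢ (𝓝[>] (0 : ℝ))

def diffQuot (φ : X → ℝ) (v : X) (p : X × ℝ) : ℝ := (φ (p.1 + p.2 • v) - φ p.1) / p.2

theorem clarkeDeriv_eq_limsup (φ : X → ℝ) (x v : X) :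
    clarkeDeriv φ x v = limsup (diffQuot φ v) (clarkeFilter x) := rfl

theorem clarkeDeriv_zero (φ : X → ℝ) (x : X) : clarkeDeriv φ x 0 = 0 := by
  have h0 : diffQuot φ 0 = fun _ => 0 := by
    funext p
    simp [diffQuot]
  rw [clarkeDeriv_eq_limsup, h0, limsup_const]

theorem tendsto_add_smul_clarkeFilter (x v : X) :
    Tendsto (fun p : X × ℝ => p.1 + p.2 • v) (clarkeFilter x) (𝓝 x) := by
  have hc : Continuous fun p : X × ℝ => p.1 + p.2 • v := by fun_prop
  have hle : clarkeFilter x ≤ 𝓝 (x, 0) := by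
    rw [nhds_prod_eq]; exact prod_mono le_rfl nhdsWithin_le_nhds
  simpa using (hc.tendsto (x, 0)).mono_left hle

theorem LocallyLipschitz.isBoundedUnder_abs_diffQuot (hF : LocallyLipschitz F) (x v : X) :
    (clarkeFilter x).IsBoundedUnder (· ≤ ·) fun p => |diffQuot F v p| := by
  obtain ⟨K, t, ht, hK⟩ := hF x
  refine isBoundedUnder_of_eventually_le (a := K * ‖v‖) ?_
  filter_upwards [tendsto_fst.eventually ht, (tendsto_add_smul_clarkeFilter x v).eventually ht,
    tendsto_snd.eventually self_mem_nhdsWithin] with p hp hpv (hp0 : 0 < p.2)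
  rw [diffQuot, abs_div, abs_of_pos hp0, div_le_iff₀ hp0, ← Real.dist_eq]
  calc dist (F (p.1 + p.2 • v)) (F p.1) ≤ K * dist (p.1 + p.2 • v) p.1 :=
        hK.dist_le_mul _ hpv _ hp
    _ = K * ‖v‖ * p.2 := by
        rw [dist_eq_norm, add_sub_cancel_left, norm_smul, Real.norm_of_nonneg hp0.le]; ring

theorem LocallyLipschitz.isBoundedUnder_diffQuot_comp (hF : LocallyLipschitz F) {x : X} (v : X)
    {m : X × ℝ → X × ℝ} (hm : Tendsto m (clarkeFilter x) (clarkeFilter x)) :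
    (clarkeFilter x).IsBoundedUnder (· ≤ ·) (diffQuot F v ∘ m) ∧
      (clarkeFilter x).IsBoundedUnder (· ≥ ·) (diffQuot F v ∘ m) :=
  isBoundedUnder_le_abs.1 (hm.isBoundedUnder_comp (hF.isBoundedUnder_abs_diffQuot x v))

theorem LocallyLipschitz.limsup_diffQuot_comp_le (hF : LocallyLipschitz F) {x : X} (v : X)
    {m : X × ℝ → X × ℝ} (hm : Tendsto m (clarkeFilter x) (clarkeFilter x)) :
    limsup (diffQuot F v ∘ m) (clarkeFilter x) ≤ clarkeDeriv F x v :=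
  limsup_le_limsup_of_le hm (hF.isBoundedUnder_diffQuot_comp v hm).2.isCoboundedUnder_le
    (hF.isBoundedUnder_diffQuot_comp v tendsto_id).1

theorem LocallyLipschitz.clarkeDeriv_smul_le (hF : LocallyLipschitz F) (x v : X) {a : ℝ}
    (ha : 0 < a) : clarkeDeriv F x (a • v) ≤ a * clarkeDeriv F x v := by
  set m : X × ℝ → X × ℝ := fun p => (p.1, p.2 * a)
  have hm : Tendsto m (clarkeFilter x) (clarkeFilter x) := by
    refine tendsto_fst.prodMk (tendsto_nhdsWithin_iff.2 ⟨?_, ?_⟩)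
    · simpa using ((tendsto_snd (f := 𝓝 x) (g := 𝓝[>] (0 : ℝ))).mono_right
        nhdsWithin_le_nhds).mul_const a
    · exact (tendsto_snd.eventually self_mem_nhdsWithin).mono fun p hp => mul_pos hp ha
  have hquot : diffQuot F (a • v) = (a * ·) ∘ diffQuot F v ∘ m := by
    funext p
    rcases eq_or_ne p.2 0 with h0 | h0
    · simp [diffQuot, m, h0]
    · simp only [diffQuot, m, Function.comp, smul_smul]
      field_simp
  obtain ⟨hle, hge⟩ := hF.isBoundedUnder_diffQuot_comp v hm
  rw [clarkeDeriv_eq_limsup, hquot, ← (monotone_mul_left_of_nonneg ha.le).map_limsup_of_continuousAt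
    _ (continuous_const_mul a).continuousAt hle hge.isCoboundedUnder_le]
  exact mul_le_mul_of_nonneg_left (hF.limsup_diffQuot_comp_le v hm) ha.le

theorem LocallyLipschitz.clarkeDeriv_smul (hF : LocallyLipschitz F) (x v : X) {a : ℝ}
    (ha : 0 < a) : clarkeDeriv F x (a • v) = a * clarkeDeriv F x v := by
  refine le_antisymm (hF.clarkeDeriv_smul_le x v ha) ?_
  have := hF.clarkeDeriv_smul_le x (a • v) (inv_pos.2 ha)
  rwa [inv_smul_smul₀ ha.ne', le_inv_mul_iff₀ ha] at this

theorem LocallyLipschitz.clarkeDeriv_add_le (hF : LocallyLipschitz F) (x u v : X) :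
    clarkeDeriv F x (u + v) ≤ clarkeDeriv F x u + clarkeDeriv F x v := by
  set m : X × ℝ → X × ℝ := fun p => (p.1 + p.2 • u, p.2)
  have hm : Tendsto m (clarkeFilter x) (clarkeFilter x) :=
    (tendsto_add_smul_clarkeFilter x u).prodMk tendsto_snd
  have hquot : diffQuot F (u + v) = diffQuot F u + diffQuot F v ∘ m := by
    funext p
    simp only [diffQuot, m, Pi.add_apply, Function.comp, smul_add, ← add_assoc]
    ring
  obtain ⟨hule, huge⟩ := hF.isBoundedUnder_diffQuot_comp u tendsto_id
  obtain ⟨hvle, hvge⟩ := hF.isBoundedUnder_diffQuot_comp v hm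
  rw [clarkeDeriv_eq_limsup, hquot]
  exact (limsup_add_le huge hule hvge.isCoboundedUnder_le hvle).trans
    (add_le_add le_rfl (hF.limsup_diffQuot_comp_le v hm))

end Clarke

section Descent

variable {F : X → ℝ}

theorem lambdaF_nonneg (F : X → ℝ) (x : X) : 0 ≤ lambdaF F x :=
  Real.sInf_nonneg (forall_mem_image.2 fun w _ => norm_nonneg w)

theorem LocallyLipschitz.lambdaF_le (hF : LocallyLipschitz F) {x : X} {c : ℝ} (hc : 0 ≤ c)
    (hcx : ∀ v, -(c * ‖v‖) ≤ clarkeDeriv F x v) : lambdaF F x ≤ c := by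
  obtain ⟨w, hw, hwc⟩ := exists_dual_le_of_sublinear (fun a ha v => hF.clarkeDeriv_smul x v ha)
    (hF.clarkeDeriv_add_le x) hc hcx
  have hw' : w ∈ clarkeSubdiff F x := hw
  exact (csInf_le ⟨0, forall_mem_image.2 fun w _ => norm_nonneg w⟩ (mem_image_of_mem _ hw')).trans
    hwc

theorem LocallyLipschitz.exists_clarkeDeriv_lt (hF : LocallyLipschitz F) {x : X} {c : ℝ}
    (hc : 0 ≤ c) (hcx : c < lambdaF F x) : ∃ v, ‖v‖ = 1 ∧ clarkeDeriv F x v < -c := by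
  obtain ⟨v, hv⟩ : ∃ v, clarkeDeriv F x v < -(c * ‖v‖) := by
    by_contra! h
    exact hcx.not_ge (hF.lambdaF_le hc h)
  have hv0 : v ≠ 0 := by
    rintro rfl
    simp [clarkeDeriv_zero] at hv
  have hnv : 0 < ‖v‖ := norm_pos_iff.2 hv0
  refine ⟨‖v‖⁻¹ • v, norm_smul_inv_norm hv0, ?_⟩
  rw [hF.clarkeDeriv_smul x v (inv_pos.2 hnv)]
  calc ‖v‖⁻¹ * clarkeDeriv F x v < ‖v‖⁻¹ * -(c * ‖v‖) :=
        mul_lt_mul_of_pos_left hv (inv_pos.2 hnv)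
    _ = -c := by field_simp

-- Capping `t` at `1` keeps the set bounded, so that a greedy choice exists.
def descentSteps (F : X → ℝ) (σ : ℝ) (y : X) : Set ℝ :=
  {t | t ∈ Ioc 0 1 ∧ ∃ v : X, ‖v‖ = 1 ∧ ∀ τ ∈ Ioc 0 t, F (y + τ • v) ≤ F y - σ * τ}

theorem LocallyLipschitz.exists_pos_eventually_mem_descentSteps (hF : LocallyLipschitz F)
    {x : X} {c : ℝ} (hc : 0 ≤ c) (hcx : c < lambdaF F x) :
    ∃ T > 0, ∀ᶠ z in 𝓝 x, ∀ σ ≤ c, T ∈ descentSteps F σ z := by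
  obtain ⟨v, hv, hvc⟩ := hF.exists_clarkeDeriv_lt hc hcx
  have hev : ∀ᶠ p in clarkeFilter x, diffQuot F v p < -c :=
    eventually_lt_of_limsup_lt hvc (hF.isBoundedUnder_diffQuot_comp v tendsto_id).1
  obtain ⟨S, hS, I, hI, hSI⟩ := eventually_prod_iff.1 hev
  obtain ⟨δ, hδ, hδI⟩ := mem_nhdsGT_iff_exists_Ioo_subset.1 hI
  have hδ0 : (0 : ℝ) < δ := hδ
  refine ⟨min (δ / 2) 1, by positivity, ?_⟩
  filter_upwards [hS] with z hz σ hσ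
  refine ⟨⟨by positivity, min_le_right _ _⟩, v, hv, fun τ hτ => ?_⟩
  have hτδ : τ < δ := hτ.2.trans_lt ((min_le_left _ _).trans_lt (half_lt_self hδ0))
  have hdesc := hSI hz (hδI ⟨hτ.1, hτδ⟩)
  rw [diffQuot, div_lt_iff₀ hτ.1] at hdesc
  linarith [mul_le_mul_of_nonneg_right hσ hτ.1.le]

theorem LocallyLipschitz.exists_greedy_mem_descentSteps (hF : LocallyLipschitz F) {y : X}
    {σ : ℝ} (hσ : 0 ≤ σ) (hσy : σ < lambdaF F y) :
    ∃ t ∈ descentSteps F σ y, ∀ t' ∈ descentSteps F σ y, t' ≤ 2 * t := by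
  obtain ⟨T, -, hT⟩ := hF.exists_pos_eventually_mem_descentSteps hσ hσy
  exact exists_mem_forall_le_two_mul ⟨T, hT.self_of_nhds σ le_rfl⟩ ⟨1, fun t ht => ht.1.2⟩
    fun t ht => ht.1.1

end Descent

section Weight

variable {h : ℝ → ℝ}

def weightIntegral (h : ℝ → ℝ) (s : ℝ) : ℝ := ∫ ρ in (0 : ℝ)..s, (1 + h ρ)⁻¹

theorem IsWeight.one_add_pos (hw : IsWeight h) {ρ : ℝ} (hρ : 0 ≤ ρ) : 0 < 1 + h ρ := by
  linarith [hw.2.2.1 ρ hρ]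

theorem IsWeight.inv_one_add_nonneg (hw : IsWeight h) {ρ : ℝ} (hρ : 0 ≤ ρ) :
    0 ≤ (1 + h ρ)⁻¹ :=
  inv_nonneg.2 (hw.one_add_pos hρ).le

theorem IsWeight.mul_inv_one_add_lt_iff (hw : IsWeight h) {ρ : ℝ} (hρ : 0 ≤ ρ) {a b : ℝ} :
    a * (1 + h ρ)⁻¹ < b ↔ a < b * (1 + h ρ) := by
  rw [← div_eq_mul_inv, div_lt_iff₀ (hw.one_add_pos hρ)]

theorem IsWeight.inv_one_add_le (hw : IsWeight h) {a b : ℝ} (ha : 0 ≤ a) (hab : a ≤ b) :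
    (1 + h b)⁻¹ ≤ (1 + h a)⁻¹ :=
  inv_anti₀ (hw.one_add_pos ha) (add_le_add_right (hw.2.1 ha (ha.trans hab) hab) 1)

theorem IsWeight.continuousOn_inv_one_add (hw : IsWeight h) :
    ContinuousOn (fun ρ => (1 + h ρ)⁻¹) (Ici 0) :=
  (continuousOn_const.add hw.1).inv₀ fun _ hρ => (hw.one_add_pos hρ).ne'

theorem IsWeight.intervalIntegrable (hw : IsWeight h) {a b : ℝ} (ha : 0 ≤ a) (hb : 0 ≤ b) :
    IntervalIntegrable (fun ρ => (1 + h ρ)⁻¹) volume a b :=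
  (hw.continuousOn_inv_one_add.mono fun _ hρ => (le_min ha hb).trans hρ.1).intervalIntegrable

theorem IsWeight.weightIntegral_mono (hw : IsWeight h) {a b : ℝ} (ha : 0 ≤ a) (hab : a ≤ b) :
    weightIntegral h a ≤ weightIntegral h b := by
  rw [weightIntegral, weightIntegral, ← sub_nonneg,
    intervalIntegral.integral_interval_sub_left (hw.intervalIntegrable le_rfl (ha.trans hab))
      (hw.intervalIntegrable le_rfl ha)]
  exact intervalIntegral.integral_nonneg hab fun ρ hρ => hw.inv_one_add_nonneg (ha.trans hρ.1)

theorem IsWeight.weightIntegral_add_le (hw : IsWeight h) {s t : ℝ} (hs : 0 ≤ s) (ht : 0 ≤ t) :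
    weightIntegral h (s + t) ≤ weightIntegral h s + t * (1 + h s)⁻¹ := by
  rw [weightIntegral, weightIntegral, ← sub_le_iff_le_add',
    intervalIntegral.integral_interval_sub_left (hw.intervalIntegrable le_rfl (by positivity))
      (hw.intervalIntegrable le_rfl hs)]
  calc ∫ ρ in s..s + t, (1 + h ρ)⁻¹ ≤ ∫ _ in s..s + t, (1 + h s)⁻¹ :=
        intervalIntegral.integral_mono_on (by linarith)
          (hw.intervalIntegrable hs (by positivity)) intervalIntegrable_const
          fun ρ hρ => hw.inv_one_add_le hs hρ.1
    _ = t * (1 + h s)⁻¹ := by simp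

theorem IsWeight.integrableOn_Ioc (hw : IsWeight h) (s : ℝ) :
    IntegrableOn (fun ρ => (1 + h ρ)⁻¹) (Ioc 0 s) :=
  (hw.continuousOn_inv_one_add.mono fun _ hρ => hρ.1).integrableOn_Icc.mono_set Ioc_subset_Icc_self

theorem IsWeight.integral_norm_eq (hw : IsWeight h) {s : ℝ} (hs : 0 ≤ s) :
    ∫ ρ in (0 : ℝ)..s, ‖(1 + h ρ)⁻¹‖ = weightIntegral h s := by
  refine intervalIntegral.integral_congr fun ρ hρ => Real.norm_of_nonneg (hw.inv_one_add_nonneg ?_)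
  rw [uIcc_of_le hs] at hρ
  exact hρ.1

theorem IsWeight.exists_lt_weightIntegral (hw : IsWeight h) (C : ℝ) :
    ∃ S, 0 ≤ S ∧ C < weightIntegral h S := by
  by_contra! hbdd
  have hint : IntegrableOn (fun ρ => (1 + h ρ)⁻¹) (Ioi 0) :=
    integrableOn_Ioi_of_intervalIntegral_norm_bounded C 0 hw.integrableOn_Ioc tendsto_id <|
      (eventually_ge_atTop 0).mono fun s hs => (hw.integral_norm_eq hs).trans_le (hbdd s hs)
  simpa [← one_div, hw.2.2.2] using hint.setLIntegral_lt_top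

theorem IsWeight.bddAbove_of_weightIntegral_le (hw : IsWeight h) {ι : Type*} {s : ι → ℝ} {K : ℝ}
    (hK : ∀ i, weightIntegral h (s i) ≤ K) : BddAbove (range s) := by
  obtain ⟨S, hS0, hS⟩ := hw.exists_lt_weightIntegral K
  refine ⟨S, forall_mem_range.2 fun i => le_of_not_gt fun hi => ?_⟩
  linarith [hK i, hw.weightIntegral_mono hS0 hi.le]

theorem IsWeight.tendsto_inv_one_add_norm (hw : IsWeight h) {ι E : Type*}
    [SeminormedAddCommGroup E] {l : Filter ι} {y : ι → E} {z : E} (hyz : Tendsto y l (𝓝 z)) :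
    Tendsto (fun i => (1 + h ‖y i‖)⁻¹) l (𝓝 (1 + h ‖z‖)⁻¹) :=
  (hw.continuousOn_inv_one_add ‖z‖ (norm_nonneg z)).tendsto.comp <|
    tendsto_nhdsWithin_iff.2 ⟨hyz.norm, Eventually.of_forall fun _ => norm_nonneg _⟩

end Weight

section WeightedDescent

variable {F : X → ℝ} {h : ℝ → ℝ} {ε : ℝ}

theorem exists_greedy_descent_step (hF : LocallyLipschitz F) (hw : IsWeight h) (hε : 0 < ε)
    {y : X} {s : ℝ} (hys : ‖y‖ ≤ s) (hy : ε < lambdaF F y * (1 + h ‖y‖)) :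
    ∃ y' t, 0 ≤ t ∧ dist y y' ≤ t ∧ ‖y'‖ ≤ s + t ∧
      F y' + ε * weightIntegral h (s + t) ≤ F y + ε * weightIntegral h s ∧
      ∀ t' ∈ descentSteps F (ε * (1 + h s)⁻¹) y, t' ≤ 2 * t := by
  have hs : 0 ≤ s := (norm_nonneg y).trans hys
  have hσ : ε * (1 + h s)⁻¹ < lambdaF F y := by
    calc ε * (1 + h s)⁻¹ ≤ ε * (1 + h ‖y‖)⁻¹ :=
          mul_le_mul_of_nonneg_left (hw.inv_one_add_le (norm_nonneg y) hys) hε.le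
      _ < lambdaF F y := (hw.mul_inv_one_add_lt_iff (norm_nonneg y)).2 hy
  obtain ⟨t, ⟨⟨ht0, -⟩, v, hv, hdesc⟩, hgreedy⟩ :=
    hF.exists_greedy_mem_descentSteps (mul_nonneg hε.le (hw.inv_one_add_nonneg hs)) hσ
  have hstep : ‖t • v‖ = t := by rw [norm_smul, hv, Real.norm_of_nonneg ht0.le, mul_one]
  refine ⟨y + t • v, t, ht0.le, by rw [dist_self_add_right, hstep], ?_, ?_, hgreedy⟩
  · linarith [norm_add_le y (t • v)]
  · have hFt := hdesc t ⟨ht0, le_rfl⟩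
    have hΨt := mul_le_mul_of_nonneg_left (hw.weightIntegral_add_le hs ht0.le) hε.le
    linarith

theorem exists_greedy_descent_seq (hF : LocallyLipschitz F) (hw : IsWeight h) (hε : 0 < ε)
    {x₀ : X} (hbad : ∀ x, F x ≤ F x₀ → ε < lambdaF F x * (1 + h ‖x‖)) :
    ∃ (y : ℕ → X) (s : ℕ → ℝ),
      (∀ n, ‖x₀‖ ≤ s n ∧ ‖y n‖ ≤ s n ∧
        F (y n) + ε * weightIntegral h (s n) ≤ F x₀ + ε * weightIntegral h ‖x₀‖) ∧
      (∀ n, s n ≤ s (n + 1) ∧ dist (y n) (y (n + 1)) ≤ s (n + 1) - s n ∧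
        ∀ t ∈ descentSteps F (ε * (1 + h (s n))⁻¹) (y n), t ≤ 2 * (s (n + 1) - s n)) := by
  refine (exists_seq_of_forall_exists_step (a₀ := (x₀, ‖x₀‖))
    (P := fun q : X × ℝ => ‖x₀‖ ≤ q.2 ∧ ‖q.1‖ ≤ q.2 ∧
      F q.1 + ε * weightIntegral h q.2 ≤ F x₀ + ε * weightIntegral h ‖x₀‖)
    (R := fun q q' => q.2 ≤ q'.2 ∧ dist q.1 q'.1 ≤ q'.2 - q.2 ∧
      ∀ t ∈ descentSteps F (ε * (1 + h q.2)⁻¹) q.1, t ≤ 2 * (q'.2 - q.2))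
    ?_ ⟨le_rfl, le_rfl, le_rfl⟩).elim fun q hq =>
      ⟨fun n => (q n).1, fun n => (q n).2, fun n => (hq.2 n).1, fun n => (hq.2 n).2⟩
  rintro ⟨y, s⟩ ⟨hx₀s, hys, hFy⟩
  have hΨ := mul_le_mul_of_nonneg_left (hw.weightIntegral_mono (norm_nonneg x₀) hx₀s) hε.le
  obtain ⟨y', t, ht, hyy', hy's, hFy', hgreedy⟩ :=
    exists_greedy_descent_step hF hw hε hys (hbad y (by dsimp only at hFy ⊢; linarith))
  exact ⟨(y', s + t), ⟨by dsimp only; linarith, hy's, hFy'.trans hFy⟩,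
    by dsimp only; linarith, by simpa using hyy', by simpa using hgreedy⟩

theorem exists_le_and_lambdaF_mul_le [CompleteSpace X] (hF : LocallyLipschitz F)
    (hbdd : BddBelow (range F)) (hw : IsWeight h) (hε : 0 < ε) (x₀ : X) :
    ∃ x, F x ≤ F x₀ ∧ lambdaF F x * (1 + h ‖x‖) ≤ ε := by
  by_contra! hbad
  obtain ⟨y, s, hinv, hstep⟩ := exists_greedy_descent_seq hF hw hε hbad
  obtain ⟨m, hm⟩ := hbdd
  have hs_bdd : BddAbove (range s) :=
    hw.bddAbove_of_weightIntegral_le (K := (F x₀ + ε * weightIntegral h ‖x₀‖ - m) / ε) fun n => by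
      rw [le_div_iff₀ hε]
      linarith [(hinv n).2.2, hm (mem_range_self (y n))]
  have hsum := summable_sub_of_monotone_of_bddAbove
    (monotone_nat_of_le_succ fun n => (hstep n).1) hs_bdd
  obtain ⟨z, hyz⟩ := cauchySeq_tendsto_of_complete
    (cauchySeq_of_dist_le_of_summable _ (fun n => (hstep n).2.1) hsum)
  have hFz : F z ≤ F x₀ := by
    refine le_of_tendsto ((hF.continuous.tendsto z).comp hyz) (Eventually.of_forall fun n => ?_)
    show F (y n) ≤ F x₀
    have := mul_le_mul_of_nonneg_left (hw.weightIntegral_mono (norm_nonneg x₀) (hinv n).1) hε.le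
    linarith [(hinv n).2.2]
  obtain ⟨c, hc, hcz⟩ := exists_between ((hw.mul_inv_one_add_lt_iff (norm_nonneg z)).2 (hbad z hFz))
  obtain ⟨T, hT, hTz⟩ := hF.exists_pos_eventually_mem_descentSteps
    ((mul_nonneg hε.le (hw.inv_one_add_nonneg (norm_nonneg z))).trans hc.le) hcz
  have hTn : ∀ᶠ n in atTop, T ∈ descentSteps F (ε * (1 + h (s n))⁻¹) (y n) := by
    filter_upwards [hyz.eventually hTz,
      ((hw.tendsto_inv_one_add_norm hyz).const_mul ε).eventually_lt_const hc] with n hn hrate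
    exact hn _ ((mul_le_mul_of_nonneg_left
      (hw.inv_one_add_le (norm_nonneg _) (hinv n).2.1) hε.le).trans hrate.le)
  obtain ⟨n, hn, hsmall⟩ :=
    (hTn.and (hsum.tendsto_atTop_zero.eventually (gt_mem_nhds (half_pos hT)))).exists
  linarith [(hstep n).2.2 T hn]

end WeightedDescent

/-- For a locally Lipschitz functional `F` bounded from below and any weight `h`, there is a
minimizing weighted Chang–Palais–Smale sequence. -/
theorem minimizing_CPS_sequence {X : Type*}
    [NormedAddCommGroup X] [NormedSpace ℝ X] [CompleteSpace X]
    (F : X → ℝ) (hF : LocallyLipschitz F) (hbdd : BddBelow (Set.range F))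
    (h : ℝ → ℝ) (hw : IsWeight h) :
    ∃ u : ℕ → X,
      Tendsto (fun n => F (u n)) atTop (𝓝 (sInf (Set.range F))) ∧
      Tendsto (fun n => lambdaF F (u n) * (1 + h ‖u n‖)) atTop (𝓝 0) := by
  have hε : ∀ n : ℕ, 0 < 1 / ((n : ℝ) + 1) := fun n => by positivity
  have hnear : ∀ n : ℕ, ∃ x, F x < sInf (range F) + 1 / ((n : ℝ) + 1) := fun n => by
    obtain ⟨_, ⟨x, rfl⟩, hx⟩ := Real.lt_sInf_add_pos (range_nonempty F) (hε n)
    exact ⟨x, hx⟩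
  choose x₀ hx₀ using hnear
  choose u hFu hlu using fun n => exists_le_and_lambdaF_mul_le hF hbdd hw (hε n) (x₀ n)
  refine ⟨u, ?_, ?_⟩
  · refine tendsto_of_tendsto_of_tendsto_of_le_of_le tendsto_const_nhds
      (by simpa using tendsto_one_div_add_atTop_nhds_zero_nat.const_add (sInf (range F)))
      (fun n => csInf_le hbdd (mem_range_self (u n))) fun n => (hFu n).trans (hx₀ n).le
  · exact tendsto_of_tendsto_of_tendsto_of_le_of_le tendsto_const_nhds
      tendsto_one_div_add_atTop_nhds_zero_nat
      (fun n => mul_nonneg (lambdaF_nonneg F _) (hw.one_add_pos (norm_nonneg _)).le) hlu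
end
end
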